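/- arXiv:2503.19451 — 2 statements merged into one kernel-verified Lean document; each statement's English description precedes it below -/
import Mathlib

section
/- Let F(x_0,...,x_n) = x_0 G_0(x_0,...,x_n) + G_1(x_1,...,x_n) G_2(x_1,...,x_n) be a homogeneous polynomial of degree d ≥ 2 in n+1 ≥ 5 variables, where G_1 and G_2 are nonconstant homogeneous polynomials in x_1,...,x_n. Then the projective hypersurface F = 0 is singular; indeed any point satisfying x_0 = G_0 = G_1 = G_2 = 0 (which exists in projective space since n ≥ 4) is a singular point of F = 0. -/
/-!
If `x₀, G₀, G₁, G₂` had no common zero over `ℚ̄` other than the origin, the Nullstellensatz would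
make the ideal of the origin the radical of an ideal with four generators, hence of height at
most `4` by Krull's height theorem; but the chain of primes `(x₀) ⊂ (x₀, x₁) ⊂ ⋯` shows that its
height is `n + 1 ≥ 5`. At a common zero, `x₀ G₀ + G₁ G₂` and, by the product rule, all of its
partial derivatives vanish.
-/

namespace MvPolynomial

theorem IsHomogeneous.constantCoeff_eq_zero {σ R : Type*} [CommSemiring R] {φ : MvPolynomial σ R}
    {n : ℕ} (hφ : φ.IsHomogeneous n) (hn : n ≠ 0) : constantCoeff φ = 0 := by
  rw [constantCoeff_eq]
  exact hφ.coeff_eq_zero (by simpa using hn.symm)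

section Height

variable {σ R : Type*} [CommRing R] [DecidableEq σ]

-- `RingHom.ker (bind₁ (s.piecewise 0 X))` is the ideal generated by the variables `X i`, `i ∈ s`.
theorem ker_bind₁_piecewise_zero_X_mono {s t : Finset σ} (hst : s ⊆ t) :
    RingHom.ker (bind₁ (s.piecewise 0 X : σ → MvPolynomial σ R)) ≤
      RingHom.ker (bind₁ (t.piecewise 0 X : σ → MvPolynomial σ R)) := by
  have hcomp : (bind₁ (t.piecewise 0 X)).comp (bind₁ (s.piecewise 0 X)) =
      bind₁ (t.piecewise 0 X : σ → MvPolynomial σ R) := by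
    rw [bind₁, bind₁, comp_aeval]
    congr 1
    ext1 i
    by_cases hi : i ∈ s
    · simp [hi, hst hi]
    · simp [hi]
  intro p hp
  rw [RingHom.mem_ker] at hp ⊢
  rw [← hcomp, AlgHom.comp_apply, hp, map_zero]

theorem X_mem_ker_bind₁_piecewise_zero_X_iff [Nontrivial R] {s : Finset σ} {i : σ} :
    (X i : MvPolynomial σ R) ∈ RingHom.ker (bind₁ (s.piecewise 0 X : σ → MvPolynomial σ R)) ↔
      i ∈ s := by
  by_cases hi : i ∈ s <;> simp [hi, X_ne_zero]

variable [IsDomain R]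

theorem card_le_height_ker_bind₁_piecewise_zero_X (s : Finset σ) :
    (s.card : ℕ∞) ≤ (RingHom.ker (bind₁ (s.piecewise 0 X : σ → MvPolynomial σ R))).height := by
  induction s using Finset.induction_on with
  | empty => simp
  | insert i s hi ih =>
    have hlt : RingHom.ker (bind₁ (s.piecewise 0 X : σ → MvPolynomial σ R)) <
        RingHom.ker (bind₁ ((insert i s).piecewise 0 X : σ → MvPolynomial σ R)) :=
      (ker_bind₁_piecewise_zero_X_mono (Finset.subset_insert i s)).lt_of_not_ge fun h => hi <|
        X_mem_ker_bind₁_piecewise_zero_X_iff.mp <|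
          h (X_mem_ker_bind₁_piecewise_zero_X_iff.mpr (Finset.mem_insert_self i s))
    have := RingHom.ker_isPrime (bind₁ (s.piecewise 0 X : σ → MvPolynomial σ R))
    have := RingHom.ker_isPrime (bind₁ ((insert i s).piecewise 0 X : σ → MvPolynomial σ R))
    rw [Finset.card_insert_of_notMem hi, Nat.cast_succ]
    exact (add_le_add_left ih 1).trans (Ideal.height_add_one_le_of_lt_of_isPrime hlt)

end Height

theorem card_le_height_ker_constantCoeff {σ R : Type*} [CommRing R] [IsDomain R] [Fintype σ] :
    (Fintype.card σ : ℕ∞) ≤ (RingHom.ker (constantCoeff : MvPolynomial σ R →+* R)).height := by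
  classical
  have hker : RingHom.ker (bind₁ (Finset.univ.piecewise 0 X : σ → MvPolynomial σ R)) =
      RingHom.ker constantCoeff := by
    ext p
    rw [Finset.piecewise_univ, RingHom.mem_ker, RingHom.mem_ker, bind₁, aeval_zero,
      algebraMap_eq, C_eq_zero]
  rw [← hker, ← Finset.card_univ]
  exact card_le_height_ker_bind₁_piecewise_zero_X Finset.univ

theorem exists_ne_zero_forall_aeval_eq_zero {σ k K : Type*} [Fintype σ] [Field k] [Field K]
    [Algebra k K] [IsAlgClosed K] (s : Finset (MvPolynomial σ k)) (hs : s.card < Fintype.card σ)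
    (hs₀ : ∀ f ∈ s, constantCoeff f = 0) : ∃ x : σ → K, x ≠ 0 ∧ ∀ f ∈ s, aeval x f = 0 := by
  by_contra! hx
  set J := Ideal.span (s : Set (MvPolynomial σ k))
  have hzero : zeroLocus K J = {0} := by
    ext x
    rw [zeroLocus_span, Set.mem_ofPred_eq, Set.mem_singleton_iff]
    refine ⟨fun h => by_contra fun hne => ?_, ?_⟩
    · obtain ⟨f, hf, hfx⟩ := hx x hne
      exact hfx (h f hf)
    · rintro rfl f hf
      rw [aeval_zero, hs₀ f hf, map_zero]
  have hrad : J.radical = RingHom.ker constantCoeff := by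
    rw [← vanishingIdeal_zeroLocus_eq_radical (K := K), hzero]
    ext p
    simp [mem_vanishingIdeal_iff, aeval_zero]
  have hmin : RingHom.ker constantCoeff ∈ J.minimalPrimes := by
    have := RingHom.ker_isPrime (constantCoeff : MvPolynomial σ k →+* k)
    rw [← Ideal.radical_minimalPrimes, hrad, Ideal.minimalPrimes_eq_subsingleton_self]
    rfl
  have := (card_le_height_ker_constantCoeff (R := k) (σ := σ)).trans
    (Ideal.height_le_card_of_mem_minimalPrimes_span_finset hmin)
  exact hs.not_ge (by exact_mod_cast this)

theorem aeval_pderiv_X_mul_add_mul_eq_zero {σ R S : Type*} [CommRing R] [CommRing S] [Algebra R S]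
    {G₀ G₁ G₂ : MvPolynomial σ R} {x : σ → S} {i : σ} (hx : x i = 0) (h₀ : aeval x G₀ = 0)
    (h₁ : aeval x G₁ = 0) (h₂ : aeval x G₂ = 0) (j : σ) :
    aeval x (pderiv j (X i * G₀ + G₁ * G₂)) = 0 := by
  simp [hx, h₀, h₁, h₂]

end MvPolynomial

open MvPolynomial

theorem stmt4_general (n d e₁ e₂ : ℕ) (hn : 4 ≤ n) (hd : 2 ≤ d)
    (F G₀ G₁ G₂ : MvPolynomial (Fin (n + 1)) ℚ)
    (hdecomp : F = X 0 * G₀ + G₁ * G₂)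
    (hG₀ : G₀.IsHomogeneous (d - 1))
    (hG₁h : G₁.IsHomogeneous e₁) (he₁ : 1 ≤ e₁)
    (hG₂h : G₂.IsHomogeneous e₂) (he₂ : 1 ≤ e₂) :
    ∃ x : Fin (n + 1) → AlgebraicClosure ℚ, x ≠ 0 ∧ x 0 = 0 ∧
      aeval x G₀ = 0 ∧ aeval x G₁ = 0 ∧ aeval x G₂ = 0 ∧
      aeval x F = 0 ∧ ∀ j, aeval x (pderiv j F) = 0 := by
  obtain ⟨x, hx, hzero⟩ := exists_ne_zero_forall_aeval_eq_zero (K := AlgebraicClosure ℚ)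
    {X 0, G₀, G₁, G₂} (Finset.card_le_four.trans_lt (by simp; omega)) (by
      simp only [Finset.mem_insert, Finset.mem_singleton, forall_eq_or_imp, forall_eq]
      exact ⟨constantCoeff_X ℚ 0, hG₀.constantCoeff_eq_zero (by omega),
        hG₁h.constantCoeff_eq_zero (by omega), hG₂h.constantCoeff_eq_zero (by omega)⟩)
  simp only [Finset.mem_insert, Finset.mem_singleton, forall_eq_or_imp, forall_eq, aeval_X]
    at hzero
  obtain ⟨hx₀, h₀, h₁, h₂⟩ := hzero
  subst hdecomp
  exact ⟨x, hx, hx₀, h₀, h₁, h₂, by simp [hx₀, h₁, h₂],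
    aeval_pderiv_X_mul_add_mul_eq_zero hx₀ h₀ h₁ h₂⟩

/-- Let `F = x₀·G₀ + G₁·G₂` be homogeneous of degree `d ≥ 2` in `n+1 ≥ 5` variables over `ℚ`,
where `G₀` is homogeneous of degree `d - 1`, and `G₁, G₂` are nonconstant homogeneous polynomials
in `x₁, …, xₙ` only.  Then the projective hypersurface `F = 0` is singular: there exists a
nonzero point over `ℚ̄` with `x₀ = G₀ = G₁ = G₂ = 0`, and it is a singular point of `F = 0`. -/
theorem stmt4 (n d e₁ e₂ : ℕ) (hn : 4 ≤ n) (hd : 2 ≤ d)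
    (F G₀ G₁ G₂ : MvPolynomial (Fin (n + 1)) ℚ)
    (hF : F.IsHomogeneous d) (hdecomp : F = X 0 * G₀ + G₁ * G₂)
    (hG₀ : G₀.IsHomogeneous (d - 1))
    (hG₁h : G₁.IsHomogeneous e₁) (he₁ : 1 ≤ e₁) (hG₁0 : G₁ ≠ 0)
    (hG₂h : G₂.IsHomogeneous e₂) (he₂ : 1 ≤ e₂) (hG₂0 : G₂ ≠ 0)
    (hv₁ : ∀ m ∈ G₁.support, m 0 = 0) (hv₂ : ∀ m ∈ G₂.support, m 0 = 0) :
    ∃ x : Fin (n + 1) → AlgebraicClosure ℚ, x ≠ 0 ∧ x 0 = 0 ∧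
      aeval x G₀ = 0 ∧ aeval x G₁ = 0 ∧ aeval x G₂ = 0 ∧
      aeval x F = 0 ∧ ∀ j, aeval x (pderiv j F) = 0 :=
  stmt4_general n d e₁ e₂ hn hd F G₀ G₁ G₂ hdecomp hG₀ hG₁h he₁ hG₂h he₂
end

section
/- The projective hypersurface X ⊆ P^5 over Q defined by F(x_0,...,x_5) = x_0(x_0^d + x_5^d) + x_1(x_1^d + x_4^d) + x_2(x_2^d + x_3^d) = 0, for d ≥ 1, is smooth and contains the 2-plane {x_0 = x_1 = x_2 = 0}. Consequently N(X,B) ≫ B^3. -/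
open MvPolynomial

/-- The polynomial `F = x₀(x₀^d + x₅^d) + x₁(x₁^d + x₄^d) + x₂(x₂^d + x₃^d)`. -/
noncomputable def Fex (d : ℕ) : MvPolynomial (Fin 6) ℚ :=
  X 0 * (X 0 ^ d + X 5 ^ d) + X 1 * (X 1 ^ d + X 4 ^ d) + X 2 * (X 2 ^ d + X 3 ^ d)

/- ### Auxiliary lemmas -/

lemma pairZero {K : Type*} [Field K] [CharZero K] (e : ℕ) (y z : K)
    (h0 : y * (((e : K) + 1) * y ^ e) + (y ^ (e + 1) + z ^ (e + 1)) = 0)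
    (h5 : y = 0 ∨ (e : K) + 1 = 0 ∨ (z = 0 ∧ ¬ e = 0)) : y = 0 ∧ z = 0 := by
  have he : ((e : K) + 1) ≠ 0 := by
    have := Nat.cast_add_one_ne_zero (R := K) e
    push_cast at this
    exact this
  rcases h5 with hy | he' | ⟨hz, _⟩
  · refine ⟨hy, ?_⟩
    rw [hy] at h0
    have h0' : z ^ (e + 1) = 0 := by
      rw [zero_pow (Nat.succ_ne_zero e)] at h0
      linear_combination h0
    exact pow_eq_zero_iff (Nat.succ_ne_zero e) |>.mp h0'
  · exact absurd he' he
  · refine ⟨?_, hz⟩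
    rw [hz] at h0
    rw [zero_pow (Nat.succ_ne_zero e)] at h0
    have h2 : ((e : K) + 2) * y ^ (e + 1) = 0 := by linear_combination h0
    have he2 : ((e : K) + 2) ≠ 0 := by
      have : (((e + 2 : ℕ) : K)) ≠ 0 := Nat.cast_ne_zero.mpr (by omega)
      push_cast at this
      exact this
    have hy1 := (mul_eq_zero.mp h2).resolve_left he2
    exact pow_eq_zero_iff (Nat.succ_ne_zero e) |>.mp hy1

lemma plane_eval (d : ℕ) (x : Fin 6 → ℚ) (h0 : x 0 = 0) (h1 : x 1 = 0) (h2 : x 2 = 0) :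
    eval x (Fex d) = 0 := by
  simp [Fex, h0, h1, h2]

lemma gcd_six (a b c : ℕ) (h : Nat.gcd a (Nat.gcd b c) = 1) :
    Finset.gcd Finset.univ (![0, 0, 0, (a : ℤ), (b : ℤ), (c : ℤ)]) = 1 := by
  have huniv : (Finset.univ : Finset (Fin 6)) = {0, 1, 2, 3, 4, 5} := by decide
  rw [huniv]
  simp only [Finset.gcd_insert, Finset.gcd_singleton]
  have h5 : (![0, 0, 0, (a : ℤ), (b : ℤ), (c : ℤ)] 5) = (c : ℤ) := rfl
  have h4 : (![0, 0, 0, (a : ℤ), (b : ℤ), (c : ℤ)] 4) = (b : ℤ) := rfl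
  have h3 : (![0, 0, 0, (a : ℤ), (b : ℤ), (c : ℤ)] 3) = (a : ℤ) := rfl
  have h2 : (![0, 0, 0, (a : ℤ), (b : ℤ), (c : ℤ)] 2) = (0 : ℤ) := rfl
  have h1 : (![0, 0, 0, (a : ℤ), (b : ℤ), (c : ℤ)] 1) = (0 : ℤ) := rfl
  have h0 : (![0, 0, 0, (a : ℤ), (b : ℤ), (c : ℤ)] 0) = (0 : ℤ) := rfl
  rw [h5, h4, h3, h2, h1, h0]
  have hn : normalize (c : ℤ) = (c : ℤ) := Int.normalize_of_nonneg (by positivity)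
  rw [hn]
  simp only [gcd_zero_left, ← Int.coe_gcd, Int.gcd_natCast_natCast, hn]
  simp [h]

def cubeT (B : ℕ) : Finset (ℕ × ℕ × ℕ) := Finset.Icc 1 B ×ˢ Finset.Icc 1 B ×ˢ Finset.Icc 1 B

def goodT (B : ℕ) : Finset (ℕ × ℕ × ℕ) :=
  (cubeT B).filter fun t => Nat.gcd t.1 (Nat.gcd t.2.1 t.2.2) = 1

lemma mult_card (B g : ℕ) : ((Finset.Icc 1 B).filter (g ∣ ·)).card = B / g := by
  rw [show Finset.Icc 1 B = Finset.Ioc 0 B from (Finset.Icc_add_one_left_eq_Ioc 0 B)]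
  exact Nat.Ioc_filter_dvd_card_eq_div B g

lemma bad_card (B : ℕ) :
    ((cubeT B).filter fun t => ¬ Nat.gcd t.1 (Nat.gcd t.2.1 t.2.2) = 1).card
      ≤ ∑ g ∈ Finset.Icc 2 B, (B / g) ^ 3 := by
  have hsub : ((cubeT B).filter fun t => ¬ Nat.gcd t.1 (Nat.gcd t.2.1 t.2.2) = 1) ⊆
      (Finset.Icc 2 B).biUnion fun g =>
        ((Finset.Icc 1 B).filter (g ∣ ·)) ×ˢ ((Finset.Icc 1 B).filter (g ∣ ·)) ×ˢ
        ((Finset.Icc 1 B).filter (g ∣ ·)) := by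
    intro t ht
    simp only [Finset.mem_filter, cubeT, Finset.mem_product, Finset.mem_Icc] at ht
    obtain ⟨⟨⟨ha1, ha2⟩, ⟨hb1, hb2⟩, hc1, hc2⟩, hg⟩ := ht
    set g := Nat.gcd t.1 (Nat.gcd t.2.1 t.2.2) with hgdef
    have hga : g ∣ t.1 := Nat.gcd_dvd_left _ _
    have hgb : g ∣ t.2.1 := (Nat.gcd_dvd_right _ _).trans (Nat.gcd_dvd_left _ _)
    have hgc : g ∣ t.2.2 := (Nat.gcd_dvd_right _ _).trans (Nat.gcd_dvd_right _ _)
    have hg0 : g ≠ 0 := fun h0 => by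
      have := Nat.eq_zero_of_zero_dvd (h0 ▸ hga); omega
    have hg2 : 2 ≤ g := by omega
    have hgB : g ≤ B := le_trans (Nat.le_of_dvd (by omega) hga) ha2
    simp only [Finset.mem_biUnion, Finset.mem_Icc, Finset.mem_product, Finset.mem_filter]
    exact ⟨g, ⟨hg2, hgB⟩, ⟨⟨ha1, ha2⟩, hga⟩, ⟨⟨hb1, hb2⟩, hgb⟩, ⟨hc1, hc2⟩, hgc⟩
  calc _ ≤ _ := Finset.card_le_card hsub
    _ ≤ ∑ g ∈ Finset.Icc 2 B, (((Finset.Icc 1 B).filter (g ∣ ·)) ×ˢ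
          ((Finset.Icc 1 B).filter (g ∣ ·)) ×ˢ ((Finset.Icc 1 B).filter (g ∣ ·))).card :=
        Finset.card_biUnion_le
    _ ≤ _ := by
        apply Finset.sum_le_sum
        intro g _
        simp [Finset.card_product, mult_card]
        ring_nf
        omega

lemma good_card (B : ℕ) (hB : 1 ≤ B) : (B : ℝ) ^ 3 / 2 ≤ ((goodT B).card : ℝ) := by
  have hsum : ∑ g ∈ Finset.Icc 2 B, (1 : ℝ) / (g : ℝ) ^ 3 ≤ 1 / 2 - 1 / (2 * B) := by
    induction B, hB using Nat.le_induction with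
    | base => simp
    | succ B hB ih =>
      rw [Finset.sum_Icc_succ_top (by omega)]
      have hB0 : (0 : ℝ) < B := by exact_mod_cast hB
      have h1 : (1 : ℝ) / ((B : ℝ) + 1) ^ 3 ≤ 1 / (2 * B) - 1 / (2 * (B + 1)) := by
        rw [div_sub_div _ _ (by positivity) (by positivity),
          div_le_div_iff₀ (by positivity) (by positivity)]
        nlinarith [sq_nonneg ((B : ℝ) - 1)]
      push_cast
      linarith
  have hsplit : (goodT B).card +
      ((cubeT B).filter fun t => ¬ Nat.gcd t.1 (Nat.gcd t.2.1 t.2.2) = 1).card =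
      (cubeT B).card :=
    Finset.card_filter_add_card_filter_not _
  have hcube : (cubeT B).card = B ^ 3 := by
    simp [cubeT, Finset.card_product, Nat.card_Icc]; ring
  have hbadR : (((cubeT B).filter fun t => ¬ Nat.gcd t.1 (Nat.gcd t.2.1 t.2.2) = 1).card : ℝ)
      ≤ (B : ℝ) ^ 3 * (1 / 2 - 1 / (2 * B)) := by
    calc (((cubeT B).filter fun t => ¬ Nat.gcd t.1 (Nat.gcd t.2.1 t.2.2) = 1).card : ℝ)
        ≤ ((∑ g ∈ Finset.Icc 2 B, (B / g) ^ 3 : ℕ) : ℝ) := by exact_mod_cast bad_card B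
      _ = ∑ g ∈ Finset.Icc 2 B, ((B / g : ℕ) : ℝ) ^ 3 := by push_cast; ring
      _ ≤ ∑ g ∈ Finset.Icc 2 B, (B : ℝ) ^ 3 * (1 / (g : ℝ) ^ 3) := by
          apply Finset.sum_le_sum
          intro g hg
          simp only [Finset.mem_Icc] at hg
          have hg0 : (0 : ℝ) < g := by exact_mod_cast (by omega : 0 < g)
          have h1 : ((B / g : ℕ) : ℝ) ≤ (B : ℝ) / (g : ℝ) := Nat.cast_div_le
          have h2 : (0 : ℝ) ≤ ((B / g : ℕ) : ℝ) := by positivity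
          calc ((B / g : ℕ) : ℝ) ^ 3 ≤ ((B : ℝ) / (g : ℝ)) ^ 3 := pow_le_pow_left₀ h2 h1 3
            _ = (B : ℝ) ^ 3 * (1 / (g : ℝ) ^ 3) := by field_simp
      _ = (B : ℝ) ^ 3 * ∑ g ∈ Finset.Icc 2 B, (1 / (g : ℝ) ^ 3) := by rw [Finset.mul_sum]
      _ ≤ (B : ℝ) ^ 3 * (1 / 2 - 1 / (2 * B)) :=
          mul_le_mul_of_nonneg_left hsum (by positivity)
  have hBR : (1 : ℝ) ≤ B := by exact_mod_cast hB
  have hnat : (goodT B).card +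
      ((cubeT B).filter fun t => ¬ Nat.gcd t.1 (Nat.gcd t.2.1 t.2.2) = 1).card = B ^ 3 := by
    rw [← hcube]; exact hsplit
  have hcast : ((goodT B).card : ℝ) = (B : ℝ) ^ 3 -
      (((cubeT B).filter fun t => ¬ Nat.gcd t.1 (Nat.gcd t.2.1 t.2.2) = 1).card : ℝ) := by
    have h := congrArg (Nat.cast : ℕ → ℝ) hnat
    push_cast at h
    linarith
  rw [hcast]
  have hpos : 0 < (B : ℝ) := by linarith
  have hmul : (B : ℝ) ^ 3 * (1 / 2 - 1 / (2 * B)) ≤ (B : ℝ) ^ 3 * (1 / 2) := by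
    apply mul_le_mul_of_nonneg_left _ (by positivity)
    have : 0 < 1 / (2 * (B : ℝ)) := by positivity
    linarith
  linarith

/-- The hypersurface `X ⊆ ℙ⁵` defined by
`x₀(x₀^d + x₅^d) + x₁(x₁^d + x₄^d) + x₂(x₂^d + x₃^d) = 0` (`d ≥ 1`) is smooth, contains the
plane `x₀ = x₁ = x₂ = 0`, and consequently `N(X, B) ≫ B³`, where `N(X, B)` counts primitive
integer points on `X` with all coordinates of absolute value at most `B`. -/
theorem stmt5 (d : ℕ) (hd : 1 ≤ d) :
    (∀ x : Fin 6 → AlgebraicClosure ℚ, x ≠ 0 →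
      ¬ (aeval x (Fex d) = 0 ∧ ∀ j, aeval x (pderiv j (Fex d)) = 0)) ∧
    (∀ x : Fin 6 → ℚ, x 0 = 0 → x 1 = 0 → x 2 = 0 → eval x (Fex d) = 0) ∧
    ∃ c : ℝ, 0 < c ∧ ∀ B : ℕ, 1 ≤ B →
      c * (B : ℝ) ^ 3 ≤
        (Nat.card {x : Fin 6 → ℤ //
          eval (fun i => (x i : ℚ)) (Fex d) = 0 ∧ (∀ i, |x i| ≤ (B : ℤ)) ∧
          Finset.gcd Finset.univ x = 1} : ℝ) := by
  obtain ⟨e, rfl⟩ : ∃ e, d = e + 1 := ⟨d - 1, by omega⟩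
  refine ⟨?_, fun x h0 h1 h2 => plane_eval _ x h0 h1 h2, ?_⟩
  · -- smoothness
    rintro x hx ⟨-, hD⟩
    have h0 := hD 0; have h1 := hD 1; have h2 := hD 2
    have h3 := hD 3; have h4 := hD 4; have h5 := hD 5
    simp [Fex, pderiv_mul, pderiv_pow, pderiv_X, Pi.single_apply] at h0 h1 h2 h3 h4 h5
    obtain ⟨hx0, hx5⟩ := pairZero e (x 0) (x 5) h0 h5
    obtain ⟨hx1, hx4⟩ := pairZero e (x 1) (x 4) h1 h4
    obtain ⟨hx2, hx3⟩ := pairZero e (x 2) (x 3) h2 h3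
    apply hx
    funext i
    fin_cases i <;> assumption
  · -- point count
    refine ⟨1 / 2, by norm_num, fun B hB => ?_⟩
    set P : (Fin 6 → ℤ) → Prop := fun x =>
      eval (fun i => (x i : ℚ)) (Fex (e + 1)) = 0 ∧ (∀ i, |x i| ≤ (B : ℤ)) ∧
        Finset.gcd Finset.univ x = 1 with hP
    have hfin : Finite {x : Fin 6 → ℤ // P x} := by
      have : Function.Injective (fun x : {x : Fin 6 → ℤ // P x} =>
          (fun i => (⟨x.1 i, by
            have := x.2.2.1 i
            rw [Set.mem_Icc]
            constructor <;> [linarith [neg_abs_le (x.1 i)]; linarith [le_abs_self (x.1 i)]]⟩ :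
            Set.Icc (-(B : ℤ)) (B : ℤ)))) := by
        intro x y h
        apply Subtype.ext
        funext i
        exact congrArg Subtype.val (congrFun h i)
      exact Finite.of_injective _ this
    -- injection from good triples
    set φ : ℕ × ℕ × ℕ → (Fin 6 → ℤ) := fun t =>
      ![0, 0, 0, (t.1 : ℤ), (t.2.1 : ℤ), (t.2.2 : ℤ)] with hφ
    have hmem : ∀ t ∈ goodT B, P (φ t) := by
      intro t ht
      simp only [goodT, cubeT, Finset.mem_filter, Finset.mem_product, Finset.mem_Icc] at ht
      obtain ⟨⟨⟨ha1, ha2⟩, ⟨hb1, hb2⟩, hc1, hc2⟩, hg⟩ := ht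
      refine ⟨?_, ?_, gcd_six _ _ _ hg⟩
      · apply plane_eval <;> simp [hφ]
      · intro i
        fin_cases i
        · show |(0:ℤ)| ≤ (B:ℤ); simp
        · show |(0:ℤ)| ≤ (B:ℤ); simp
        · show |(0:ℤ)| ≤ (B:ℤ); simp
        · show |((t.1 : ℕ) : ℤ)| ≤ (B:ℤ)
          rw [abs_of_nonneg (by positivity)]; exact_mod_cast ha2
        · show |((t.2.1 : ℕ) : ℤ)| ≤ (B:ℤ)
          rw [abs_of_nonneg (by positivity)]; exact_mod_cast hb2
        · show |((t.2.2 : ℕ) : ℤ)| ≤ (B:ℤ)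
          rw [abs_of_nonneg (by positivity)]; exact_mod_cast hc2
    have hinj : Function.Injective (fun t : {t // t ∈ goodT B} =>
        (⟨φ t.1, hmem t.1 t.2⟩ : {x : Fin 6 → ℤ // P x})) := by
      intro t s h
      have h' : φ t.1 = φ s.1 := congrArg Subtype.val h
      have e3 : (t.1.1 : ℤ) = (s.1.1 : ℤ) := congrFun h' 3
      have e4 : (t.1.2.1 : ℤ) = (s.1.2.1 : ℤ) := congrFun h' 4
      have e5 : (t.1.2.2 : ℤ) = (s.1.2.2 : ℤ) := congrFun h' 5
      apply Subtype.ext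
      have := Nat.cast_injective (R := ℤ)
      exact Prod.ext (by exact_mod_cast e3) (Prod.ext (by exact_mod_cast e4) (by exact_mod_cast e5))
    have hle : (goodT B).card ≤ Nat.card {x : Fin 6 → ℤ // P x} := by
      have := Nat.card_le_card_of_injective _ hinj
      rwa [Nat.card_eq_fintype_card, Fintype.card_coe] at this
    have hgc := good_card B hB
    have : ((goodT B).card : ℝ) ≤ (Nat.card {x : Fin 6 → ℤ // P x} : ℝ) := by exact_mod_cast hle
    calc (1 / 2 : ℝ) * (B : ℝ) ^ 3 = (B : ℝ) ^ 3 / 2 := by ring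
      _ ≤ ((goodT B).card : ℝ) := hgc
      _ ≤ _ := this
end
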